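/- Let N ≥ 2 be an integer and let c ≥ 2N² + 1. Let (v_j) ⊂ E_N, a_j ∈ (0,1], δ_j ∈ (0,1) with a_j → 0 and δ_j → 0, such that max_{s∈(0,1]} |v_j(s)|^N/s^{N−1} = |v_j(a_j)|^N/a_j^{N−1} = 1 − δ_j for every j. Fix ν > 0 sufficiently small and let k_j(ν) be the smallest integer with k_j(ν)·c·δ_j ≥ ν, and set I_j^k = [ a_j(1 − (k+1)cδ_j), a_j(1 − kcδ_j) ]. Then for all sufficiently large j, for every k = 1, 2, …, k_j(ν) − 1 and every s ∈ I_j^k one has |v_j(s)|^N / s^{N−1} ≤ 1 − k·δ_j. -/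

import Mathlib

open MeasureTheory Real Set Filter

/-- `u` belongs to `E_N` with weak derivative `g`. -/
def MemEN (N : ℕ) (u g : ℝ → ℝ) : Prop :=
  (∀ s ∈ Set.Icc (0:ℝ) 1, u s = ∫ t in (0:ℝ)..s, g t) ∧
  u 0 = 0 ∧
  IntervalIntegrable g MeasureTheory.volume 0 1 ∧
  MeasureTheory.IntegrableOn (fun t => |g t| ^ N) (Set.Ioc (0:ℝ) 1) ∧
  (∫ t in Set.Ioc (0:ℝ) 1, |g t| ^ N) = 1

/-!
If `|v s|^N / s^(N-1) > 1 - kδ` at some `s ≤ a (1 - kcδ)`, Hölder's inequality on `(0, s]` puts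
more than `1 - kδ` of the `N`-energy of `v'` there, so less than `kδ` lies on `(s, a]`, and Hölder
on `(s, a]` gives `|v a - v s| ≤ (kδ)^(1/N) (a - s)^θ` with `θ = 1 - 1/N`. On the other hand the
maximality at `a` and the concavity of `t ↦ t^θ` give
`|v a| - |v s| ≥ (1 - δ)^(1/N) (a^θ - s^θ) ≥ (1 - δ)^(1/N) θ r a^θ` with `r = (a - s)/a ≥ kcδ`.
Comparing the two bounds yields `(1 - δ) θ^N r ≤ kδ`, hence `(1 - δ) θ^N c ≤ 1`, which
`c ≥ 2N² + 1` excludes since `θ^N ≥ (N - 1)/N²` by Bernoulli's inequality.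
-/

lemma abs_setIntegral_Ioc_pow_le {N : ℕ} (hN : N ≠ 0) {f : ℝ → ℝ} {s t : ℝ} (hst : s ≤ t)
    (hf : IntegrableOn f (Ioc s t)) (hfN : IntegrableOn (fun x => |f x| ^ N) (Ioc s t)) :
    |∫ x in Ioc s t, f x| ^ N ≤ (∫ x in Ioc s t, |f x| ^ N) * (t - s) ^ (N - 1) := by
  rcases hst.eq_or_lt with rfl | hst
  · simp [hN]
  have hlen : volume.real (Ioc s t) = t - s := by simp [hst.le]
  have hjensen : (⨍ x in Ioc s t, |f x|) ^ N ≤ ⨍ x in Ioc s t, |f x| ^ N :=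
    (convexOn_pow N).map_set_average_le (continuousOn_pow N) isClosed_Ici (by simp [hst])
      (by simp) (.of_forall fun x => abs_nonneg (f x)) hf.abs hfN
  rw [setAverage_eq, setAverage_eq, hlen, smul_eq_mul, smul_eq_mul, mul_pow, inv_pow] at hjensen
  have hts : 0 < t - s := sub_pos.2 hst
  calc |∫ x in Ioc s t, f x| ^ N ≤ (∫ x in Ioc s t, |f x|) ^ N :=
        pow_le_pow_left₀ (abs_nonneg _) (abs_integral_le_integral_abs) N
    _ = (t - s) ^ N * (((t - s) ^ N)⁻¹ * (∫ x in Ioc s t, |f x|) ^ N) := by field_simp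
    _ ≤ (t - s) ^ N * ((t - s)⁻¹ * ∫ x in Ioc s t, |f x| ^ N) := by gcongr
    _ = (∫ x in Ioc s t, |f x| ^ N) * (t - s) ^ (N - 1) := by
        rw [← pow_sub_one_mul hN]; field_simp

lemma rpow_inv_mul_rpow_one_sub_inv_pow {N : ℕ} (hN : N ≠ 0) {C t : ℝ} (hC : 0 ≤ C) (ht : 0 ≤ t) :
    (C ^ (N : ℝ)⁻¹ * t ^ (1 - (N : ℝ)⁻¹)) ^ N = C * t ^ (N - 1) := by
  have hN' : (N : ℝ) ≠ 0 := Nat.cast_ne_zero.2 hN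
  rw [mul_pow, ← rpow_natCast, ← rpow_mul hC, inv_mul_cancel₀ hN', rpow_one, ← rpow_natCast,
    ← rpow_mul ht, sub_mul, inv_mul_cancel₀ hN', one_mul, ← rpow_natCast,
    Nat.cast_sub (Nat.one_le_iff_ne_zero.2 hN), Nat.cast_one]

lemma rpow_le_rpow_mul_one_sub {θ s a : ℝ} (hs : 0 ≤ s) (ha : 0 < a) (hθ₀ : 0 ≤ θ) (hθ₁ : θ ≤ 1) :
    s ^ θ ≤ a ^ θ * (1 - θ * ((a - s) / a)) := by
  have h := rpow_one_add_le_one_add_mul_self (s := s / a - 1) (by linarith [div_nonneg hs ha.le])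
    hθ₀ hθ₁
  rw [add_sub_cancel, div_rpow hs ha.le, div_le_iff₀ (rpow_pos_of_pos ha θ)] at h
  calc s ^ θ ≤ (1 + θ * (s / a - 1)) * a ^ θ := h
    _ = a ^ θ * (1 - θ * ((a - s) / a)) := by field_simp; ring

lemma mul_one_sub_inv_pow_mul_le {N : ℕ} (hN : N ≠ 0) {M E a s x y : ℝ} (hs : 0 < s)
    (hsa : s < a) (hM : 0 ≤ M) (hx : M * a ^ (N - 1) ≤ |x| ^ N) (hy : |y| ^ N ≤ M * s ^ (N - 1))
    (hxy : |x - y| ^ N ≤ E * (a - s) ^ (N - 1)) :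
    M * (1 - (N : ℝ)⁻¹) ^ N * ((a - s) / a) ≤ E := by
  have ha : 0 < a := hs.trans hsa
  have has : 0 < a - s := sub_pos.2 hsa
  have hE : 0 ≤ E := nonneg_of_mul_nonneg_left ((pow_nonneg (abs_nonneg _) N).trans hxy)
    (pow_pos has _)
  set θ : ℝ := 1 - (N : ℝ)⁻¹
  set r := (a - s) / a
  have hθ₀ : 0 ≤ θ := sub_nonneg.2 (Nat.cast_inv_le_one N)
  have hθ₁ : θ ≤ 1 := sub_le_self _ (by positivity)
  have hr : 0 < r := div_pos has ha
  have hroot {C t z : ℝ} (hC : 0 ≤ C) (ht : 0 ≤ t) (hz : 0 ≤ z) :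
      C ^ (N : ℝ)⁻¹ * t ^ θ ≤ z ↔ C * t ^ (N - 1) ≤ z ^ N := by
    rw [← rpow_inv_mul_rpow_one_sub_inv_pow hN hC ht]
    exact (pow_le_pow_iff_left₀ (by positivity) hz hN).symm
  have hroot' {C t z : ℝ} (hC : 0 ≤ C) (ht : 0 ≤ t) (hz : 0 ≤ z) :
      z ≤ C ^ (N : ℝ)⁻¹ * t ^ θ ↔ z ^ N ≤ C * t ^ (N - 1) := by
    rw [← rpow_inv_mul_rpow_one_sub_inv_pow hN hC ht]
    exact (pow_le_pow_iff_left₀ hz (by positivity) hN).symm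
  set m := M ^ (N : ℝ)⁻¹
  set e := E ^ (N : ℝ)⁻¹
  have hx' : m * a ^ θ ≤ |x| := (hroot hM ha.le (abs_nonneg x)).2 hx
  have hy' : |y| ≤ m * s ^ θ := (hroot' hM hs.le (abs_nonneg y)).2 hy
  have hxy' : |x - y| ≤ e * (a - s) ^ θ := (hroot' hE has.le (abs_nonneg _)).2 hxy
  have hsplit : (a - s) ^ θ = r ^ θ * a ^ θ := by
    rw [← mul_rpow hr.le ha.le, div_mul_cancel₀ _ ha.ne']
  have hscaled : m * θ * r * a ^ θ ≤ e * r ^ θ * a ^ θ :=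
    calc m * θ * r * a ^ θ = m * a ^ θ - m * (a ^ θ * (1 - θ * r)) := by ring
      _ ≤ |x| - |y| := by
        gcongr
        · exact hy'.trans (by gcongr; exact rpow_le_rpow_mul_one_sub hs.le ha hθ₀ hθ₁)
      _ ≤ |x - y| := abs_sub_abs_le_abs_sub x y
      _ ≤ e * r ^ θ * a ^ θ := by rw [mul_assoc, ← hsplit]; exact hxy'
  have hpow : M * θ ^ N * r ^ N ≤ E * r ^ (N - 1) := by
    have := (hroot' hE hr.le (by positivity)).1 (le_of_mul_le_mul_right hscaled (by positivity))
    rwa [mul_pow, mul_pow, rpow_inv_natCast_pow hM hN] at this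
  refine le_of_mul_le_mul_right ?_ (pow_pos hr (N - 1))
  calc M * θ ^ N * r * r ^ (N - 1) = M * θ ^ N * r ^ N := by rw [← pow_sub_one_mul hN r]; ring
    _ ≤ E * r ^ (N - 1) := hpow

lemma inv_le_one_sub_inv_pow_sub_one {N : ℕ} (hN : N ≠ 0) :
    (N : ℝ)⁻¹ ≤ (1 - (N : ℝ)⁻¹) ^ (N - 1) := by
  have h := one_add_mul_le_pow (a := -(N : ℝ)⁻¹) (by linarith [Nat.cast_inv_le_one (α := ℝ) N])
    (N - 1)
  rw [Nat.cast_sub (Nat.one_le_iff_ne_zero.2 hN), Nat.cast_one, ← sub_eq_add_neg] at h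
  calc (N : ℝ)⁻¹ = 1 + ((N : ℝ) - 1) * -(N : ℝ)⁻¹ := by field_simp; ring
    _ ≤ _ := h

lemma one_lt_mul_one_sub_inv_pow_mul {N : ℕ} (hN : 2 ≤ N) {D c : ℝ} (hD : D ≤ 1 / 2)
    (hc : 2 * (N : ℝ) ^ 2 + 1 ≤ c) : 1 < (1 - D) * (1 - (N : ℝ)⁻¹) ^ N * c := by
  have hN2 : (2 : ℝ) ≤ N := by exact_mod_cast hN
  have hpow : ((N : ℝ) - 1) / N ^ 2 ≤ (1 - (N : ℝ)⁻¹) ^ N :=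
    calc ((N : ℝ) - 1) / N ^ 2 = (N : ℝ)⁻¹ * (1 - (N : ℝ)⁻¹) := by field_simp
      _ ≤ (1 - (N : ℝ)⁻¹) ^ (N - 1) * (1 - (N : ℝ)⁻¹) := by
        gcongr
        · exact sub_nonneg.2 (Nat.cast_inv_le_one N)
        · exact inv_le_one_sub_inv_pow_sub_one (by omega)
      _ = (1 - (N : ℝ)⁻¹) ^ N := pow_sub_one_mul (by omega) _
  calc (1 : ℝ) < 1 / 2 * (((N : ℝ) - 1) / N ^ 2) * (2 * N ^ 2 + 1) := by
        rw [← sub_pos]; field_simp; nlinarith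
    _ ≤ (1 - D) * (1 - (N : ℝ)⁻¹) ^ N * c := by
        have hq : 0 ≤ ((N : ℝ) - 1) / N ^ 2 := div_nonneg (by linarith) (by positivity)
        gcongr
        · exact mul_nonneg (by linarith) (hq.trans hpow)
        all_goals linarith

namespace MemEN

variable {N : ℕ} {v g : ℝ → ℝ}

lemma abs_sub_pow_le (hv : MemEN N v g) (hN : N ≠ 0) {s t : ℝ} (hs : 0 ≤ s) (hst : s ≤ t)
    (ht : t ≤ 1) : |v t - v s| ^ N ≤ (∫ x in Ioc s t, |g x| ^ N) * (t - s) ^ (N - 1) := by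
  obtain ⟨hprim, -, hg, hgN, -⟩ := hv
  have hsub {a b : ℝ} (ha : 0 ≤ a) (hab : a ≤ b) (hb : b ≤ 1) : uIcc a b ⊆ uIcc 0 1 := by
    rw [uIcc_of_le hab, uIcc_of_le zero_le_one]; exact Icc_subset_Icc ha hb
  rw [hprim t ⟨hs.trans hst, ht⟩, hprim s ⟨hs, hst.trans ht⟩,
    intervalIntegral.integral_interval_sub_left (hg.mono_set (hsub le_rfl (hs.trans hst) ht))
      (hg.mono_set (hsub le_rfl hs (hst.trans ht))), intervalIntegral.integral_of_le hst]
  exact abs_setIntegral_Ioc_pow_le hN hst (hg.mono_set (hsub hs hst ht)).1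
    (hgN.mono_set (Ioc_subset_Ioc hs ht))

lemma setIntegral_Ioc_add_setIntegral_Ioc_le_one (hv : MemEN N v g) {s a : ℝ} (hs : 0 ≤ s)
    (hsa : s ≤ a) (ha : a ≤ 1) :
    (∫ x in Ioc 0 s, |g x| ^ N) + ∫ x in Ioc s a, |g x| ^ N ≤ 1 := by
  obtain ⟨-, -, -, hgN, hmass⟩ := hv
  rw [← setIntegral_union (Ioc_disjoint_Ioc_of_le le_rfl) measurableSet_Ioc
    (hgN.mono_set (Ioc_subset_Ioc le_rfl (hsa.trans ha))) (hgN.mono_set (Ioc_subset_Ioc hs ha)),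
    Ioc_union_Ioc_eq_Ioc hs hsa, ← hmass]
  exact setIntegral_mono_set hgN (.of_forall fun x => by positivity)
    (Ioc_subset_Ioc le_rfl ha).eventuallyLE

lemma pow_div_pow_le_one_sub_mul (hv : MemEN N v g) (hN : 2 ≤ N) {c δ a K s : ℝ}
    (hc : 2 * (N : ℝ) ^ 2 + 1 ≤ c) (ha : a ∈ Ioc 0 1) (hδ : 0 < δ) (hδ₂ : δ ≤ 1 / 2)
    (hmax : ∀ s ∈ Ioc 0 1, |v s| ^ N / s ^ (N - 1) ≤ 1 - δ)
    (heq : |v a| ^ N / a ^ (N - 1) = 1 - δ) (hK : 0 < K) (hs : 0 < s)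
    (hgap : K * c * δ ≤ (a - s) / a) : |v s| ^ N / s ^ (N - 1) ≤ 1 - K * δ := by
  have hN₀ : N ≠ 0 := by omega
  have hKδ : 0 < K * δ := mul_pos hK hδ
  have hc₀ : 0 < c := (by positivity : (0 : ℝ) < 2 * (N : ℝ) ^ 2 + 1).trans_le hc
  have hsa : s < a := sub_pos.1 <| (div_pos_iff_of_pos_right ha.1).1 <|
    (by positivity : 0 < K * c * δ).trans_le hgap
  by_contra! hlt
  have hinner : 1 - K * δ < ∫ x in Ioc 0 s, |g x| ^ N := by
    have := hv.abs_sub_pow_le hN₀ le_rfl hs.le (hsa.le.trans ha.2)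
    rw [hv.2.1, sub_zero, sub_zero, ← div_le_iff₀ (pow_pos hs _)] at this
    exact hlt.trans_le this
  have houter : ∫ x in Ioc s a, |g x| ^ N ≤ K * δ := by
    linarith [hv.setIntegral_Ioc_add_setIntegral_Ioc_le_one hs.le hsa.le ha.2]
  have hx : (1 - δ) * a ^ (N - 1) ≤ |v a| ^ N := ((div_eq_iff (pow_pos ha.1 _).ne').1 heq).ge
  have hy : |v s| ^ N ≤ (1 - δ) * s ^ (N - 1) :=
    (div_le_iff₀ (pow_pos hs _)).1 (hmax s ⟨hs, hsa.le.trans ha.2⟩)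
  have hxy : |v a - v s| ^ N ≤ K * δ * (a - s) ^ (N - 1) :=
    (hv.abs_sub_pow_le hN₀ hs.le hsa.le ha.2).trans
      (mul_le_mul_of_nonneg_right houter (pow_nonneg (sub_pos.2 hsa).le _))
  have hdecay := mul_one_sub_inv_pow_mul_le hN₀ hs hsa (by linarith) hx hy hxy
  have hθ := one_lt_mul_one_sub_inv_pow_mul hN hδ₂ hc
  have : (1 - δ) * (1 - (N : ℝ)⁻¹) ^ N * c * (K * δ) ≤ 1 * (K * δ) :=
    calc (1 - δ) * (1 - (N : ℝ)⁻¹) ^ N * c * (K * δ)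
        = (1 - δ) * (1 - (N : ℝ)⁻¹) ^ N * (K * c * δ) := by ring
      _ ≤ (1 - δ) * (1 - (N : ℝ)⁻¹) ^ N * ((a - s) / a) := by
        gcongr
        exact mul_nonneg (by linarith) (pow_nonneg (sub_nonneg.2 (Nat.cast_inv_le_one N)) _)
      _ ≤ 1 * (K * δ) := by rw [one_mul]; exact hdecay
  linarith [le_of_mul_le_mul_right this hKδ]

end MemEN

theorem decay_left_intervals_general (N : ℕ) (hN : 2 ≤ N) (c : ℝ) (hc : 2 * (N : ℝ) ^ 2 + 1 ≤ c)
    (v g : ℕ → ℝ → ℝ) (hv : ∀ j, MemEN N (v j) (g j))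
    (a δ : ℕ → ℝ) (ha : ∀ j, a j ∈ Set.Ioc (0:ℝ) 1) (hδ : ∀ j, δ j ∈ Set.Ioo (0:ℝ) 1)
    (hδ0 : Filter.Tendsto δ Filter.atTop (nhds 0))
    (hmax : ∀ j, ∀ s ∈ Set.Ioc (0:ℝ) 1, |v j s| ^ N / s ^ (N - 1) ≤ 1 - δ j)
    (heq : ∀ j, |v j (a j)| ^ N / (a j) ^ (N - 1) = 1 - δ j) :
    ∃ ν₀ > (0:ℝ), ∀ ν : ℝ, 0 < ν → ν ≤ ν₀ →
      ∀ᶠ j : ℕ in Filter.atTop, ∀ k : ℕ, 1 ≤ k → k < ⌈ν / (c * δ j)⌉₊ →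
        ∀ s ∈ Set.Icc (a j * (1 - ((k : ℝ) + 1) * c * δ j)) (a j * (1 - (k : ℝ) * c * δ j)),
          |v j s| ^ N / s ^ (N - 1) ≤ 1 - (k : ℝ) * δ j := by
  have hc₀ : 0 < c := (by positivity : (0 : ℝ) < 2 * (N : ℝ) ^ 2 + 1).trans_le hc
  refine ⟨1 / 2, one_half_pos, fun ν _ hν => ?_⟩
  filter_upwards [hδ0.eventually_lt_const (show 0 < 1 / (4 * c) by positivity)]
    with j hj k hk hkν s hs
  have hδj := (hδ j).1
  have hcδ : c * δ j < 1 / 4 := by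
    have := (lt_div_iff₀ (by positivity)).1 hj; linarith
  have hkcδ : k * c * δ j < 1 / 2 := by
    have := (lt_div_iff₀ (by positivity)).1 (Nat.lt_ceil.1 hkν); linarith
  have hs₀ : 0 < s := (mul_pos (ha j).1 (by linarith)).trans_le hs.1
  refine (hv j).pow_div_pow_le_one_sub_mul hN hc (ha j) hδj (by nlinarith) (hmax j) (heq j)
    (by positivity) hs₀ ?_
  rw [le_div_iff₀ (ha j).1]
  linarith [hs.2]

/-- Lemma 4.2: let `c ≥ 2N² + 1`, `v_j ∈ E_N` with concentration data
`a_j → 0`, `δ_j → 0` and `max_{(0,1]} |v_j(s)|^N/s^{N-1} = |v_j(a_j)|^N/a_j^{N-1} = 1 − δ_j`.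
Then for every sufficiently small `ν > 0` and all sufficiently large `j`: for
`k = 1, …, k_j(ν) − 1` (where `k_j(ν) = ⌈ν/(c δ_j)⌉` is the smallest integer with
`k_j(ν) c δ_j ≥ ν`) and `s ∈ I_j^k = [a_j(1 − (k+1)cδ_j), a_j(1 − kcδ_j)]` one has
`|v_j(s)|^N/s^{N-1} ≤ 1 − k δ_j`. -/
theorem decay_left_intervals (N : ℕ) (hN : 2 ≤ N) (c : ℝ) (hc : 2 * (N : ℝ) ^ 2 + 1 ≤ c)
    (v g : ℕ → ℝ → ℝ) (hv : ∀ j, MemEN N (v j) (g j))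
    (a δ : ℕ → ℝ) (ha : ∀ j, a j ∈ Set.Ioc (0:ℝ) 1) (hδ : ∀ j, δ j ∈ Set.Ioo (0:ℝ) 1)
    (ha0 : Filter.Tendsto a Filter.atTop (nhds 0))
    (hδ0 : Filter.Tendsto δ Filter.atTop (nhds 0))
    (hmax : ∀ j, ∀ s ∈ Set.Ioc (0:ℝ) 1, |v j s| ^ N / s ^ (N - 1) ≤ 1 - δ j)
    (heq : ∀ j, |v j (a j)| ^ N / (a j) ^ (N - 1) = 1 - δ j) :
    ∃ ν₀ > (0:ℝ), ∀ ν : ℝ, 0 < ν → ν ≤ ν₀ →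
      ∀ᶠ j : ℕ in Filter.atTop, ∀ k : ℕ, 1 ≤ k → k < ⌈ν / (c * δ j)⌉₊ →
        ∀ s ∈ Set.Icc (a j * (1 - ((k : ℝ) + 1) * c * δ j)) (a j * (1 - (k : ℝ) * c * δ j)),
          |v j s| ^ N / s ^ (N - 1) ≤ 1 - (k : ℝ) * δ j :=
  decay_left_intervals_general N hN c hc v g hv a δ ha hδ hδ0 hmax heq
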